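/- arXiv:math/9911186 — 4 statements merged into one kernel-verified Lean document; each statement's English description precedes it below -/
import Mathlib

section
/- Let N be a standard real subspace of a complex Hilbert space H. There exists a standard real subspace M with N ⊊ M (proper inclusion) if and only if the pair (N, iN) is not strongly standard, i.e., if and only if N + iN ≠ H. -/
/-- Multiplication by `i` as a real-linear map. -/
noncomputable def mulI (H : Type*) [NormedAddCommGroup H] [InnerProductSpace ℂ H] :
    H →ₗ[ℝ] H where
  toFun x := (Complex.I : ℂ) • x
  map_add' x y := smul_add _ x y
  map_smul' r x := by simpa using (smul_comm (Complex.I) r x)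

/-!
If `N + iN = H`, any `y` in a standard `M ⊇ N` is `a + ib` with `a, b ∈ N`, so `ib = y - a` lies in
`M ∩ iM = 0` and `y ∈ N`: strongly standard subspaces are maximal. Conversely, `N + iN` is a
complex subspace, so for `y ∉ N + iN` the only complex multiple of `y` in `N + iN` is `0`; this
makes `M = N + ℝy` separating, and `M` is closed because `ℝy` is finite dimensional.
-/

open Submodule

section

variable {H : Type*} [NormedAddCommGroup H] [InnerProductSpace ℂ H]

@[simp]
lemma mulI_apply (x : H) : mulI H x = Complex.I • x := rfl

lemma mulI_mulI (x : H) : mulI H (mulI H x) = -x := by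
  simp [smul_smul]

lemma complex_smul_eq_re_smul_add_im_smul_mulI (c : ℂ) (x : H) :
    c • x = c.re • x + c.im • mulI H x := by
  rw [mulI_apply, ← Complex.coe_smul c.re, ← Complex.coe_smul c.im, smul_smul, ← add_smul,
    Complex.re_add_im]

lemma smul_mem_of_forall_mulI_mem {P : Submodule ℝ H} (hP : ∀ z ∈ P, mulI H z ∈ P)
    (c : ℂ) {z : H} (hz : z ∈ P) : c • z ∈ P := by
  rw [complex_smul_eq_re_smul_add_im_smul_mulI]
  exact P.add_mem (P.smul_mem _ hz) (P.smul_mem _ (hP z hz))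

lemma mulI_mem_sup_map_mulI (N : Submodule ℝ H) {z : H} (hz : z ∈ N ⊔ N.map (mulI H)) :
    mulI H z ∈ N ⊔ N.map (mulI H) := by
  obtain ⟨a, ha, _, ⟨b, hb, rfl⟩, rfl⟩ := mem_sup.mp hz
  rw [map_add, mulI_mulI, add_comm]
  exact add_mem_sup (N.neg_mem hb) (mem_map_of_mem ha)

lemma eq_zero_of_smul_mem_sup_map_mulI {N : Submodule ℝ H} {y : H}
    (hy : y ∉ N ⊔ N.map (mulI H)) {c : ℂ} (hc : c • y ∈ N ⊔ N.map (mulI H)) : c = 0 := by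
  by_contra hc0
  refine hy ?_
  simpa [smul_smul, hc0] using
    smul_mem_of_forall_mulI_mem (fun _ => mulI_mem_sup_map_mulI N) c⁻¹ hc

lemma eq_of_le_of_inf_map_mulI_eq_bot {N M : Submodule ℝ H} (hNM : N ≤ M)
    (hM : M ⊓ M.map (mulI H) = ⊥) (hN : N ⊔ N.map (mulI H) = ⊤) : N = M := by
  refine le_antisymm hNM fun y hy => ?_
  obtain ⟨a, ha, _, ⟨b, hb, rfl⟩, rfl⟩ := mem_sup.mp (hN ▸ mem_top : y ∈ N ⊔ N.map (mulI H))
  have hib : mulI H b ∈ M ⊓ M.map (mulI H) :=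
    ⟨by simpa using M.sub_mem hy (hNM ha), mem_map_of_mem (hNM hb)⟩
  rw [hM, mem_bot] at hib
  simpa [hib] using ha

lemma inf_map_mulI_sup_span_singleton_eq_bot {N : Submodule ℝ H}
    (hN : N ⊓ N.map (mulI H) = ⊥) {y : H} (hy : y ∉ N ⊔ N.map (mulI H)) :
    (N ⊔ ℝ ∙ y) ⊓ (N ⊔ ℝ ∙ y).map (mulI H) = ⊥ := by
  rw [eq_bot_iff]
  rintro x ⟨hx, ⟨w, hw, rfl⟩⟩
  obtain ⟨n, hn, _, hr, hx⟩ := mem_sup.mp hx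
  obtain ⟨r, rfl⟩ := mem_span_singleton.mp hr
  obtain ⟨n', hn', _, hs, rfl⟩ := mem_sup.mp hw
  obtain ⟨s, rfl⟩ := mem_span_singleton.mp hs
  have hcomb : ((r : ℂ) - s * Complex.I) • y = mulI H n' - n := by
    rw [sub_smul, mul_comm, ← smul_smul, Complex.coe_smul, Complex.coe_smul, ← mulI_apply,
      sub_eq_sub_iff_add_eq_add, ← map_add, ← hx, add_comm]
  have hc0 := eq_zero_of_smul_mem_sup_map_mulI hy
    (hcomb ▸ sub_mem (mem_sup_right (mem_map_of_mem hn')) (mem_sup_left hn))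
  obtain ⟨hr0, hs0⟩ : r = 0 ∧ s = 0 := by simpa using Complex.ext_iff.mp hc0
  subst hr0 hs0
  simp only [zero_smul, add_zero] at hx ⊢
  have hmem : mulI H n' ∈ N ⊓ N.map (mulI H) := ⟨hx ▸ hn, mem_map_of_mem hn'⟩
  rwa [hN] at hmem

end

theorem exists_standard_extension_iff_not_strongly_standard_general {H : Type*}
    [NormedAddCommGroup H] [InnerProductSpace ℂ H]
    (N : Submodule ℝ H) (hNc : IsClosed (N : Set H))
    (hstd1 : N ⊓ N.map (mulI H) = ⊥)
    (hstd2 : (N ⊔ N.map (mulI H)).topologicalClosure = ⊤) :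
    (∃ M : Submodule ℝ H, IsClosed (M : Set H) ∧ M ⊓ M.map (mulI H) = ⊥ ∧
        (M ⊔ M.map (mulI H)).topologicalClosure = ⊤ ∧ N < M)
      ↔ N ⊔ N.map (mulI H) ≠ ⊤ := by
  constructor
  · rintro ⟨M, -, hM, -, hNM⟩ htop
    exact hNM.ne (eq_of_le_of_inf_map_mulI_eq_bot hNM.le hM htop)
  · intro htop
    obtain ⟨y, hy⟩ := SetLike.exists_not_mem_of_ne_top _ htop
    have hNM : N < N ⊔ ℝ ∙ y := lt_sup_iff_notMem.mpr fun hyN => hy (mem_sup_left hyN)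
    refine ⟨N ⊔ ℝ ∙ y, isClosed_sup_finiteDimensional N _ hNc,
      inf_map_mulI_sup_span_singleton_eq_bot hstd1 hy, ?_, hNM⟩
    exact top_le_iff.mp <| hstd2 ▸ topologicalClosure_mono (sup_le_sup hNM.le (map_mono hNM.le))

/-- A standard real subspace `N` of a complex Hilbert space admits
a proper standard extension `M` if and only if the pair `(N, iN)` is not
strongly standard, i.e. iff `N + iN ≠ H`. -/
theorem exists_standard_extension_iff_not_strongly_standard {H : Type*}
    [NormedAddCommGroup H] [InnerProductSpace ℂ H] [CompleteSpace H]
    (N : Submodule ℝ H) (hNc : IsClosed (N : Set H))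
    (hstd1 : N ⊓ N.map (mulI H) = ⊥)
    (hstd2 : (N ⊔ N.map (mulI H)).topologicalClosure = ⊤) :
    (∃ M : Submodule ℝ H, IsClosed (M : Set H) ∧ M ⊓ M.map (mulI H) = ⊥ ∧
        (M ⊔ M.map (mulI H)).topologicalClosure = ⊤ ∧ N < M)
      ↔ N ⊔ N.map (mulI H) ≠ ⊤ :=
  exists_standard_extension_iff_not_strongly_standard_general N hNc hstd1 hstd2
end

section
/- Let N be a closed real subspace of a complex Hilbert space H with N ∩ N' = {0} (a factor subspace), where N' is the symplectic complement. If N + N' = H (the pair (N, N') is strongly standard), then for any closed real subspace M with N ⊆ M and M ∩ N' = {0} we have M = N. -/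
/-- The symplectic complement of a real subspace of a complex Hilbert space. -/
noncomputable def symplComp {H : Type*} [NormedAddCommGroup H] [InnerProductSpace ℂ H]
    (N : Submodule ℝ H) : Submodule ℝ H where
  carrier := {x | ∀ n ∈ N, (inner ℂ x n : ℂ).im = 0}
  zero_mem' := by intro n hn; simp
  add_mem' := by
    intro a b ha hb n hn
    rw [inner_add_left]
    simp [ha n hn, hb n hn]
  smul_mem' := by
    intro c x hx n hn
    have h1 : (c • x : H) = ((c : ℂ) • x) := by
      simp [Complex.coe_algebraMap, algebraMap_smul]
    rw [h1, inner_smul_left]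
    simp [hx n hn]

theorem strongly_standard_factor_no_extension_general {H : Type*}
    [NormedAddCommGroup H] [InnerProductSpace ℂ H]
    (N : Submodule ℝ H) (hsum : N ⊔ symplComp N = ⊤) :
    ∀ M : Submodule ℝ H, IsClosed (M : Set H) → N ≤ M → M ⊓ symplComp N = ⊥ →
      M = N := fun _ _ hNM hMF =>
  (eq_of_le_of_inf_le_of_sup_le hNM (hMF ▸ bot_le) (hsum ▸ le_top)).symm

/-- If `N` is a factor subspace with `N + N' = H`, then any closed
real subspace `M ⊇ N` with `M ∩ N' = {0}` equals `N`. -/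
theorem strongly_standard_factor_no_extension {H : Type*}
    [NormedAddCommGroup H] [InnerProductSpace ℂ H] [CompleteSpace H]
    (N : Submodule ℝ H) (hNc : IsClosed (N : Set H))
    (hfactor : N ⊓ symplComp N = ⊥)
    (hsum : N ⊔ symplComp N = ⊤) :
    ∀ M : Submodule ℝ H, IsClosed (M : Set H) → N ≤ M → M ⊓ symplComp N = ⊥ →
      M = N :=
  strongly_standard_factor_no_extension_general N hsum
end

section
/- In ℂ² with the standard inner product, let M be the real subspace spanned by y⁺ = (cos(θ/2), sin(θ/2)) and y⁻ = (i cos(θ/2), −i sin(θ/2)) for a fixed θ ∈ (0, π/2], and let K = {(a, −a) : a ∈ ℝ}. Then for all unit vectors h ∈ M and k ∈ K, |Re⟨h, k⟩| ≤ √2/2. -/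
set_option maxHeartbeats 1000000 in
/-- In `ℂ²`, with `M` the real span of
`y⁺ = (cos(θ/2), sin(θ/2))` and `y⁻ = (i cos(θ/2), −i sin(θ/2))`, `θ ∈ (0, π/2]`,
and `K = {(a, −a) : a ∈ ℝ}`, every pair of unit vectors `h ∈ M`, `k ∈ K`
satisfies `|Re⟨h,k⟩| ≤ √2/2`. -/
theorem fiberwise_estimate {θ : ℝ} (hθ1 : 0 < θ) (hθ2 : θ ≤ Real.pi / 2) :
    let yplus : EuclideanSpace ℂ (Fin 2) :=
      (WithLp.equiv 2 (Fin 2 → ℂ)).symm ![(Real.cos (θ/2) : ℂ), (Real.sin (θ/2) : ℂ)]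
    let yminus : EuclideanSpace ℂ (Fin 2) :=
      (WithLp.equiv 2 (Fin 2 → ℂ)).symm
        ![Complex.I * Real.cos (θ/2), -(Complex.I * Real.sin (θ/2))]
    let M : Submodule ℝ (EuclideanSpace ℂ (Fin 2)) := Submodule.span ℝ {yplus, yminus}
    let K : Submodule ℝ (EuclideanSpace ℂ (Fin 2)) :=
      Submodule.span ℝ {(WithLp.equiv 2 (Fin 2 → ℂ)).symm ![(1 : ℂ), (-1 : ℂ)]}
    ∀ h ∈ M, ∀ k ∈ K, ‖h‖ = 1 → ‖k‖ = 1 →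
      |(inner ℂ h k : ℂ).re| ≤ Real.sqrt 2 / 2 := by
  intro yplus yminus M K h hM k hK hh hk
  rw [Submodule.mem_span_pair] at hM
  obtain ⟨a, b, rfl⟩ := hM
  rw [Submodule.mem_span_singleton] at hK
  obtain ⟨c, rfl⟩ := hK
  set co := Real.cos (θ/2)
  set s := Real.sin (θ/2)
  have hs0 : 0 ≤ s := Real.sin_nonneg_of_nonneg_of_le_pi (by positivity) (by nlinarith [Real.pi_pos])
  have hs1 : s ≤ 1 := Real.sin_le_one _
  have hc0 : 0 ≤ co := Real.cos_nonneg_of_mem_Icc ⟨by nlinarith [Real.pi_pos], by nlinarith [Real.pi_pos]⟩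
  have hc1 : co ≤ 1 := Real.cos_le_one _
  have hcs : co^2 + s^2 = 1 := by
    have := Real.sin_sq_add_cos_sq (θ/2); linarith
  have hnh : a^2 + b^2 = 1 := by
    have h2 : ‖a • yplus + b • yminus‖^2 = 1 := by rw [hh]; norm_num
    rw [← @inner_self_eq_norm_sq ℂ] at h2
    simp only [yplus, yminus, PiLp.inner_apply, RCLike.inner_apply, Fin.sum_univ_two,
      PiLp.add_apply, PiLp.smul_apply, WithLp.equiv_symm_apply, WithLp.ofLp_toLp, PiLp.toLp_apply, Matrix.cons_val_zero,
      Matrix.cons_val_one, Matrix.head_cons, Complex.real_smul, map_add, map_mul, map_neg,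
      RCLike.re_to_complex,
      Complex.add_re, Complex.mul_re, Complex.conj_re, Complex.conj_im,
      Complex.ofReal_re, Complex.ofReal_im, Complex.I_re, Complex.I_im, Complex.neg_re,
      Complex.neg_im, Complex.add_im, Complex.mul_im] at h2
    nlinarith [h2]
  have hnk : c^2 * 2 = 1 := by
    have h2 : ‖c • (WithLp.equiv 2 (Fin 2 → ℂ)).symm ![(1:ℂ), (-1:ℂ)]‖^2 = 1 := by rw [hk]; norm_num
    rw [← @inner_self_eq_norm_sq ℂ] at h2
    simp only [PiLp.inner_apply, RCLike.inner_apply, Fin.sum_univ_two,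
      PiLp.smul_apply, WithLp.equiv_symm_apply, WithLp.ofLp_toLp, PiLp.toLp_apply, Matrix.cons_val_zero,
      Matrix.cons_val_one, Matrix.head_cons, Complex.real_smul, map_mul, map_one, map_neg,
      Complex.conj_ofReal, RCLike.re_to_complex,
      Complex.add_re, Complex.mul_re, Complex.mul_im,
      Complex.ofReal_re, Complex.ofReal_im, Complex.one_re, Complex.one_im,
      Complex.neg_re, Complex.neg_im] at h2
    nlinarith [h2]
  have key : (inner ℂ (a • yplus + b • yminus)
      (c • (WithLp.equiv 2 (Fin 2 → ℂ)).symm ![(1:ℂ), (-1:ℂ)]) : ℂ).re = c * (a * (co - s)) := by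
    simp only [yplus, yminus, PiLp.inner_apply, RCLike.inner_apply, Fin.sum_univ_two,
      PiLp.add_apply, PiLp.smul_apply, WithLp.equiv_symm_apply, WithLp.ofLp_toLp, PiLp.toLp_apply, Matrix.cons_val_zero,
      Matrix.cons_val_one, Matrix.head_cons, Complex.real_smul, map_add, map_mul, map_neg, map_one,
      Complex.add_re, Complex.mul_re, Complex.mul_im, Complex.conj_re, Complex.conj_im,
      Complex.ofReal_re, Complex.ofReal_im, Complex.I_re, Complex.I_im, Complex.neg_re,
      Complex.neg_im, Complex.one_re, Complex.one_im, Complex.add_im]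
    ring
  rw [key, abs_mul, abs_mul]
  have hs2 : Real.sqrt 2 ^ 2 = 2 := Real.sq_sqrt (by norm_num)
  have hca : |c| = Real.sqrt 2 / 2 := by
    have hfac : (|c| - Real.sqrt 2/2) * (|c| + Real.sqrt 2/2) = 0 := by
      nlinarith [sq_abs c]
    rcases mul_eq_zero.mp hfac with h0 | h0
    · linarith
    · have h2' : 0 < Real.sqrt 2 := Real.sqrt_pos.mpr (by norm_num)
      exfalso; linarith [abs_nonneg c]
  have ha1 : |a| ≤ 1 := by nlinarith [sq_abs a, abs_nonneg a, sq_nonneg b]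
  have hd1 : |co - s| ≤ 1 := by rw [abs_le]; constructor <;> nlinarith
  rw [hca]
  have hprod : |a| * |co - s| ≤ 1 := by nlinarith [abs_nonneg a, abs_nonneg (co - s)]
  nlinarith [Real.sqrt_nonneg 2, abs_nonneg a, abs_nonneg (co - s)]
end

section
/- Let M₀ ⊆ M₁ be standard subspaces with tower M_k and B_k = M_{k+1} ∩ Ker(j_k + I) as above. Then B_{k+1} ∩ B_k' = {0} for every k, where ' is the symplectic complement. Equivalently, B_{k+1} ∩ B_k' = M_{k+1} ∩ M_{k+1}' ∩ Ker(j_{k+1} + I), and since elements of the center M_{k+1} ∩ M_{k+1}' are fixed by j_{k+1} (j_{k+1}x = x), the intersection is trivial. -/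
section SymplecticComplement

variable {H : Type*} [NormedAddCommGroup H] [InnerProductSpace ℂ H]

lemma mem_symplComp {N : Submodule ℝ H} {x : H} :
    x ∈ symplComp N ↔ ∀ n ∈ N, (inner ℂ x n : ℂ).im = 0 :=
  Iff.rfl

lemma symplComp_antitone : Antitone (symplComp : Submodule ℝ H → Submodule ℝ H) :=
  fun _ _ hAB _ hx => mem_symplComp.mpr fun n hn => mem_symplComp.mp hx n (hAB hn)

lemma symplComp_sup (A B : Submodule ℝ H) :
    symplComp (A ⊔ B) = symplComp A ⊓ symplComp B := by
  refine le_antisymm (le_inf (symplComp_antitone le_sup_left)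
    (symplComp_antitone le_sup_right)) ?_
  rintro x ⟨hxA, hxB⟩
  refine mem_symplComp.mpr fun n hn => ?_
  obtain ⟨a, ha, b, hb, rfl⟩ := Submodule.mem_sup.mp hn
  rw [inner_add_right, Complex.add_im, mem_symplComp.mp hxA a ha, mem_symplComp.mp hxB b hb,
    add_zero]

end SymplecticComplement

lemma LinearMap.mem_ker_add_id_iff {R M : Type*} [Ring R] [AddCommGroup M] [Module R M]
    (f : M →ₗ[R] M) {x : M} : x ∈ LinearMap.ker (f + LinearMap.id) ↔ f x = -x := by
  rw [LinearMap.mem_ker, LinearMap.add_apply, LinearMap.id_apply, eq_neg_iff_add_eq_zero]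

theorem Bk1_inter_Bk_comm_trivial_general {H : Type*}
    [NormedAddCommGroup H] [InnerProductSpace ℂ H]
    (Mk Mk1 Mk2 Bk Bk1 : Submodule ℝ H)
    (jk1 : H →ₗ[ℝ] H)
    (hBk1def : Bk1 = Mk2 ⊓ LinearMap.ker (jk1 + LinearMap.id))
    (hBk1sub : Bk1 ≤ symplComp Mk)
    (hsum : Mk1 = Mk ⊔ Bk)
    (hjM : (symplComp Mk1).map jk1 = Mk1)
    (hfix : ∀ x ∈ Mk1 ⊓ symplComp Mk1, jk1 x = x) :
    Bk1 ⊓ symplComp Bk = ⊥ := by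
  rw [eq_bot_iff]
  rintro x ⟨hxB1, hxBk⟩
  have hjx : jk1 x = -x := jk1.mem_ker_add_id_iff.mp (hBk1def ▸ hxB1).2
  have hx_compl : x ∈ symplComp Mk1 := by
    rw [hsum, symplComp_sup]
    exact ⟨hBk1sub hxB1, hxBk⟩
  have hxM1 : x ∈ Mk1 := by
    rw [← neg_mem_iff, ← hjM]
    exact ⟨x, hx_compl, hjx⟩
  have hx_eq_neg : x = -x := (hfix x ⟨hxM1, hx_compl⟩).symm.trans hjx
  have : IsAddTorsionFree H := .of_isTorsionFree ℂ H
  exact (Submodule.mem_bot ℝ).mpr (self_eq_neg.mp hx_eq_neg)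

/-- In the tower of standard subspaces, `B_{k+1} ∩ B_k' = {0}`.
Here `Mk = M_k`, `Mk1 = M_{k+1}`, `Mk2 = M_{k+2}`, `jk1 = j_{k+1}` the modular
conjugation of `M_{k+1}`, `Bk1 = B_{k+1} = M_{k+2} ∩ Ker(j_{k+1} + I)`.
The key facts are supplied as hypotheses: `M_{k+1} = M_k + B_k` (so that
`(M_k ∨ B_k)' = M_{k+1}'`), `B_{k+1} ⊆ M_k'`, `j_{k+1} M_{k+1}' = M_{k+1}`,
and every element of the center `M_{k+1} ∩ M_{k+1}'` is fixed by `j_{k+1}`. -/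
theorem Bk1_inter_Bk_comm_trivial {H : Type*}
    [NormedAddCommGroup H] [InnerProductSpace ℂ H] [CompleteSpace H]
    (Mk Mk1 Mk2 Bk Bk1 : Submodule ℝ H)
    (jk1 : H →ₗ[ℝ] H)
    (hjinv : ∀ x, jk1 (jk1 x) = x)
    (hjconj : ∀ x, jk1 (Complex.I • x) = -(Complex.I • jk1 x))
    (hjanti : ∀ x y : H, (inner ℂ (jk1 x) (jk1 y) : ℂ) = inner ℂ y x)
    (hBk1def : Bk1 = Mk2 ⊓ LinearMap.ker (jk1 + LinearMap.id))
    (hBk1sub : Bk1 ≤ symplComp Mk)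
    (hsum : Mk1 = Mk ⊔ Bk)
    (hjM : (symplComp Mk1).map jk1 = Mk1)
    (hfix : ∀ x ∈ Mk1 ⊓ symplComp Mk1, jk1 x = x) :
    Bk1 ⊓ symplComp Bk = ⊥ :=
  Bk1_inter_Bk_comm_trivial_general Mk Mk1 Mk2 Bk Bk1 jk1 hBk1def hBk1sub hsum hjM hfix
end
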